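/- arXiv:0910.5865 — 2 statements merged into one kernel-verified Lean document; each statement's English description precedes it below -/
import Mathlib

section
/- Let M ≥ 2 and m ≥ 3 with m² ≥ M + 2 and m ≤ M. Then there exist subsets X, Y ⊆ Z/M, each of cardinality exactly m, such that: (i) for every e ∈ Z/M, γ_e(X,Y) ≥ 1; and (ii) γ_0(X,Y) ≥ 2 and γ_1(X,Y) ≥ 2, where γ_e(X,Y) = #{i ∈ Z/M : i ∈ Y and i + e ∈ X} with addition modulo M. -/
theorem stmt_4 (M m : ℕ) (hM : 2 ≤ M) (hm3 : 3 ≤ m) (hm2 : M + 2 ≤ m ^ 2)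
    (hmM : m ≤ M) [NeZero M] :
    ∃ X Y : Finset (ZMod M), X.card = m ∧ Y.card = m ∧
      (∀ e : ZMod M,
        1 ≤ (Finset.univ.filter (fun i : ZMod M => i ∈ Y ∧ i + e ∈ X)).card) ∧
      2 ≤ (Finset.univ.filter (fun i : ZMod M => i ∈ Y ∧ i + 0 ∈ X)).card ∧
      2 ≤ (Finset.univ.filter (fun i : ZMod M => i ∈ Y ∧ i + 1 ∈ X)).card := by
  have hmm : m ^ 2 = m * m := sq m
  set s : ℕ := max 1 (M + m - m * m) with hs
  have hs1 : 1 ≤ s := le_max_left _ _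
  have hs2 : s + 2 ≤ m := by omega
  have hsM : M ≤ s + m * m - m := by omega
  set F : Finset ℕ := (Finset.Ico 1 M).filter (fun n => n % m = s) with hF
  set T : Finset ℕ := insert 0 F with hT
  have hTlt : ∀ n ∈ T, n < M := by
    intro n hn
    rcases Finset.mem_insert.mp hn with h | h
    · omega
    · exact (Finset.mem_Ico.mp (Finset.mem_filter.mp h).1).2
  have hsT : s ∈ T :=
    Finset.mem_insert_of_mem (Finset.mem_filter.mpr
      ⟨Finset.mem_Ico.mpr ⟨hs1, by omega⟩, Nat.mod_eq_of_lt (by omega)⟩)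
  have h0T : (0:ℕ) ∈ T := Finset.mem_insert_self _ _
  have hFcard : F.card ≤ m - 1 := by
    have : F.card ≤ (Finset.range (m-1)).card := by
      apply Finset.card_le_card_of_injOn (fun n => n / m)
      · intro n hn
        obtain ⟨h1, h2⟩ := Finset.mem_filter.mp hn
        obtain ⟨h3, h4⟩ := Finset.mem_Ico.mp h1
        have hd := Nat.div_add_mod n m
        rw [h2] at hd
        refine Finset.mem_range.mpr ?_
        by_contra hq
        push_neg at hq
        have h5 : m * (m - 1) ≤ m * (n / m) := Nat.mul_le_mul_left m hq
        have hmsub : m * (m - 1) = m * m - m := by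
          rw [Nat.mul_sub, Nat.mul_one]
        omega
      · intro x hx y hy hxy
        obtain ⟨_, hx2⟩ := Finset.mem_filter.mp hx
        obtain ⟨_, hy2⟩ := Finset.mem_filter.mp hy
        have hdx := Nat.div_add_mod x m
        have hdy := Nat.div_add_mod y m
        simp only at hxy
        rw [hx2] at hdx; rw [hy2] at hdy; rw [hxy] at hdx
        omega
    simpa using this
  have hTcard : T.card ≤ m := by
    have h := Finset.card_insert_le 0 F
    rw [← hT] at h
    omega
  have hinj : ∀ a < M, ∀ b < M, (a : ZMod M) = b → a = b := by
    intro a ha b hb hab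
    have h1 := ZMod.val_cast_of_lt ha
    have h2 := ZMod.val_cast_of_lt hb
    rw [hab] at h1
    omega
  set X : Finset (ZMod M) := (Finset.range m).image (Nat.cast) with hX
  have hXcard : X.card = m := by
    rw [hX, Finset.card_image_of_injOn, Finset.card_range]
    intro a ha b hb hab
    exact hinj a (lt_of_lt_of_le (Finset.mem_range.mp ha) hmM) b
      (lt_of_lt_of_le (Finset.mem_range.mp hb) hmM) hab
  have hmemX : ∀ a : ℕ, a < m → (a : ZMod M) ∈ X := fun a ha =>
    Finset.mem_image.mpr ⟨a, Finset.mem_range.mpr ha, rfl⟩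
  set Y0 : Finset (ZMod M) := T.image Nat.cast with hY0
  have hY0card : Y0.card ≤ m := le_trans Finset.card_image_le hTcard
  obtain ⟨Y, hY0Y, _, hYcard⟩ := Finset.exists_subsuperset_card_eq Y0.subset_univ hY0card
    (by rw [Finset.card_univ, ZMod.card]; exact hmM)
  have hYmem : ∀ n ∈ T, (n : ZMod M) ∈ Y := fun n hn =>
    hY0Y (Finset.mem_image.mpr ⟨n, hn, rfl⟩)
  -- covering lemma
  have key : ∀ k < M, ∃ n ∈ T, (n + k) % M < m := by
    intro k hk
    by_cases hkm : k < m
    · exact ⟨0, h0T, by rwa [Nat.zero_add, Nat.mod_eq_of_lt (by omega)]⟩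
    push_neg at hkm
    set c : ℕ := M - k with hc
    by_cases hcs : c ≤ s
    · refine ⟨s, hsT, ?_⟩
      rw [Nat.mod_eq_sub_mod (by omega), Nat.mod_eq_of_lt (by omega)]
      omega
    · push_neg at hcs
      set d : ℕ := c - s with hd
      have hd1 : 1 ≤ d := by omega
      have hkey := Nat.div_add_mod (d - 1) m
      have hblt : (d - 1) % m < m := Nat.mod_lt _ (by omega)
      set a : ℕ := (d - 1) / m with ha
      set b : ℕ := (d - 1) % m with hb
      obtain ⟨P, hP⟩ : ∃ P, m * a = P := ⟨_, rfl⟩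
      rw [hP] at hkey
      refine ⟨P + (s + m), ?_, ?_⟩
      · refine Finset.mem_insert_of_mem (Finset.mem_filter.mpr
          ⟨Finset.mem_Ico.mpr ⟨by omega, by omega⟩, ?_⟩)
        rw [← hP, Nat.mul_add_mod, Nat.add_mod_right, Nat.mod_eq_of_lt (by omega)]
      · rw [Nat.mod_eq_sub_mod (by omega), Nat.mod_eq_of_lt (by omega)]
        omega
  have hcastadd : ∀ (n : ℕ) (e : ZMod M), (n : ZMod M) + e = (((n + e.val) % M : ℕ) : ZMod M) := by
    intro n e
    rw [ZMod.natCast_mod, Nat.cast_add, ZMod.natCast_rightInverse e]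
  refine ⟨X, Y, hXcard, hYcard, ?_, ?_, ?_⟩
  · intro e
    obtain ⟨n, hnT, hnlt⟩ := key e.val (ZMod.val_lt e)
    refine Finset.card_pos.mpr ⟨(n : ZMod M), Finset.mem_filter.mpr
      ⟨Finset.mem_univ _, hYmem n hnT, ?_⟩⟩
    rw [hcastadd n e]
    exact hmemX _ hnlt
  · refine Finset.one_lt_card.mpr ⟨(0 : ZMod M), ?_, (s : ZMod M), ?_, ?_⟩
    · refine Finset.mem_filter.mpr ⟨Finset.mem_univ _, ?_, ?_⟩
      · simpa using hYmem 0 h0T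
      · rw [add_zero]
        simpa using hmemX 0 (by omega)
    · refine Finset.mem_filter.mpr ⟨Finset.mem_univ _, hYmem s hsT, ?_⟩
      rw [add_zero]
      exact hmemX s (by omega)
    · intro h
      have := hinj 0 (by omega) s (by omega) (by simpa using h)
      omega
  · refine Finset.one_lt_card.mpr ⟨(0 : ZMod M), ?_, (s : ZMod M), ?_, ?_⟩
    · refine Finset.mem_filter.mpr ⟨Finset.mem_univ _, ?_, ?_⟩
      · simpa using hYmem 0 h0T
      · rw [zero_add]
        simpa using hmemX 1 (by omega)
    · refine Finset.mem_filter.mpr ⟨Finset.mem_univ _, hYmem s hsT, ?_⟩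
      have : (s : ZMod M) + 1 = ((s + 1 : ℕ) : ZMod M) := by push_cast; ring
      rw [this]
      exact hmemX (s + 1) (by omega)
    · intro h
      have := hinj 0 (by omega) s (by omega) (by simpa using h)
      omega
end

section
/- Let M ≥ 2 and let X, Y ⊆ Z/M with γ_e(X,Y) ≥ 1 for all e ∈ Z/M, where γ_e(X,Y) = #{i ∈ Z/M : i ∈ Y, i+e ∈ X}. Define for n ≥ 1 the n-fold product sets X^{(n)} = {(l_1,…,l_n) ∈ (Z/M)^n : l_j ∈ X for all j} and Y^{(n)} likewise, viewed as subsets of Z/M^n via the M-adic encoding l_1…l_n ↦ Σ_j l_j M^{n−j}. Then for every e ∈ Z/M^n, γ_e(X^{(n)}, Y^{(n)}) ≥ 1, where now γ_e is computed with addition modulo M^n. -/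
/-!
Adding `e` to an `M`-adic word is done digit by digit from the least significant end, with
carries. At each position, the hypothesis on `X` and `Y` supplies a digit `i ∈ Y` such that `i`
plus the current digit of `e` (carry included) is a digit in `X`; the carry produced there is
passed on to the more significant positions, and the carry out of the top position disappears
modulo `M ^ n`.
-/

open Finset

def wordValue {M n : ℕ} (f : Fin n → ZMod M) : ℕ :=
  ∑ j : Fin n, (f j).val * M ^ (n - 1 - j.val)

lemma wordValue_snoc {M n : ℕ} (f : Fin n → ZMod M) (a : ZMod M) :
    wordValue (Fin.snoc f a : Fin (n + 1) → ZMod M) = M * wordValue f + a.val := by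
  have hshift : ∀ j : Fin n, (f j).val * M ^ (n - j.val)
      = M * ((f j).val * M ^ (n - 1 - j.val)) := fun j => by
    rw [show n - j.val = (n - 1 - j.val) + 1 by omega, pow_succ]
    ring
  simp only [wordValue, Fin.sum_univ_castSucc, Fin.snoc_castSucc, Fin.snoc_last,
    Fin.val_castSucc, Fin.val_last, Nat.add_sub_cancel, Nat.sub_self, pow_zero, mul_one, hshift,
    ← mul_sum]

theorem exists_wordValue_add_modEq {M : ℕ} [NeZero M] {X Y : Finset (ZMod M)}
    (hXY : ∀ e : ZMod M, ∃ i ∈ Y, i + e ∈ X) (n E : ℕ) :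
    ∃ f g : Fin n → ZMod M, (∀ j, f j ∈ Y) ∧ (∀ j, g j ∈ X) ∧
      wordValue f + E ≡ wordValue g [MOD M ^ n] := by
  induction n generalizing E with
  | zero => exact ⟨Fin.elim0, Fin.elim0, nofun, nofun, Nat.modEq_one⟩
  | succ n ih =>
    obtain ⟨i, hiY, hiX⟩ := hXY E
    obtain ⟨f, g, hf, hg, hfg⟩ := ih ((i.val + E) / M)
    have hlast : (i + E).val = (i.val + E) % M := by
      rw [← ZMod.val_natCast, Nat.cast_add, ZMod.natCast_val, ZMod.cast_id]
    refine ⟨Fin.snoc f i, Fin.snoc g (i + E), Fin.lastCases (by simpa) (by simpa),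
      Fin.lastCases (by simpa) (by simpa), ?_⟩
    rw [wordValue_snoc, wordValue_snoc, hlast, pow_succ']
    calc M * wordValue f + i.val + E
        = M * (wordValue f + (i.val + E) / M) + (i.val + E) % M := by
          have := Nat.div_add_mod (i.val + E) M
          linarith
      _ ≡ M * wordValue g + (i.val + E) % M [MOD M * M ^ n] :=
          (hfg.mul_left' M).add_right _

theorem stmt_13_general (M : ℕ) [NeZero M] (n : ℕ)
    (X Y : Finset (ZMod M))
    (h1 : ∀ e : ZMod M,
      1 ≤ (Finset.univ.filter (fun i : ZMod M => i ∈ Y ∧ i + e ∈ X)).card)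
    (Xn Yn : Finset (ZMod (M ^ n)))
    (hXn : Xn = (Fintype.piFinset (fun _ : Fin n => X)).image
      (fun f => ((∑ j : Fin n, (f j).val * M ^ (n - 1 - j.val) : ℕ) : ZMod (M ^ n))))
    (hYn : Yn = (Fintype.piFinset (fun _ : Fin n => Y)).image
      (fun f => ((∑ j : Fin n, (f j).val * M ^ (n - 1 - j.val) : ℕ) : ZMod (M ^ n)))) :
    ∀ e : ZMod (M ^ n),
      1 ≤ (Finset.univ.filter (fun i : ZMod (M ^ n) => i ∈ Yn ∧ i + e ∈ Xn)).card := by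
  have hXY : ∀ e : ZMod M, ∃ i ∈ Y, i + e ∈ X := fun e => by
    obtain ⟨i, hi⟩ := card_pos.1 (h1 e)
    exact ⟨i, (mem_filter.1 hi).2⟩
  intro e
  obtain ⟨f, g, hf, hg, hfg⟩ := exists_wordValue_add_modEq hXY n e.val
  refine card_pos.2 ⟨(wordValue f : ZMod (M ^ n)), mem_filter.2 ⟨mem_univ _, ?_, ?_⟩⟩
  · rw [hYn]
    exact mem_image_of_mem _ (Fintype.mem_piFinset.2 hf)
  · have hsum : (wordValue f : ZMod (M ^ n)) + e = (wordValue g : ZMod (M ^ n)) := by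
      rw [← ZMod.natCast_zmod_val e, ← Nat.cast_add, ZMod.natCast_eq_natCast_iff]
      exact hfg
    rw [hsum, hXn]
    exact mem_image_of_mem _ (Fintype.mem_piFinset.2 hg)

theorem stmt_13 (M : ℕ) (hM : 2 ≤ M) [NeZero M] (n : ℕ) (hn : 1 ≤ n) [NeZero (M ^ n)]
    (X Y : Finset (ZMod M))
    (h1 : ∀ e : ZMod M,
      1 ≤ (Finset.univ.filter (fun i : ZMod M => i ∈ Y ∧ i + e ∈ X)).card)
    (Xn Yn : Finset (ZMod (M ^ n)))
    (hXn : Xn = (Fintype.piFinset (fun _ : Fin n => X)).image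
      (fun f => ((∑ j : Fin n, (f j).val * M ^ (n - 1 - j.val) : ℕ) : ZMod (M ^ n))))
    (hYn : Yn = (Fintype.piFinset (fun _ : Fin n => Y)).image
      (fun f => ((∑ j : Fin n, (f j).val * M ^ (n - 1 - j.val) : ℕ) : ZMod (M ^ n)))) :
    ∀ e : ZMod (M ^ n),
      1 ≤ (Finset.univ.filter (fun i : ZMod (M ^ n) => i ∈ Yn ∧ i + e ∈ Xn)).card :=
  stmt_13_general M n X Y h1 Xn Yn hXn hYn
end
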